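/- Let A be a subset of the finite state space S of a Markov chain. For all x ∈ A and y ∈ S∖A, the exit probability decomposes over simple paths: Pˣ(X_{τ_{S∖A}} = y) = Σ_{γ ∈ Γ_A(x,y), p(γ)>0} Π_{i=1}^{|γ|−1} p(γ_i, γ_{i+1}) / (1 − P^{γ_i}(X_{τ⁺_{(S∖A)∪{γ_1,…,γ_i}}} = γ_i)). -/

import Mathlib

/-!
Write `E_C(a, z)` for the total weight of the paths from `a` to `z` whose interior states lie in
`C` (`exitMass`). Cutting a path from `x ∈ A` to `y ∉ A` at its first return to `x` gives
`E_A(x, y) = E_{A∖{x}}(x, y) + E_{A∖{x}}(x, x) · E_A(x, y)`. Almost sure exit forces the return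
probability `E_{A∖{x}}(x, x)` below `1`: if it were `1`, no path could leave `A` without returning
to `x`, whereas cutting an exit path at its last visit to `x` gives one that does not. Hence
`E_A(x, y) = E_{A∖{x}}(x, y) / (1 - E_{A∖{x}}(x, x))`, and expanding
`E_{A∖{x}}(x, y)` over the next state shows that `E_A(x, y)` obeys the same recursion as the sum
over simple paths, in which adding `x` to the visited prefix amounts to removing it from `A`.
Induction on `|A|` concludes; paths with `p(γ) = 0` contribute to neither side.
-/

def pathProb {S : Type*} (p : S → S → ℝ) : List S → ℝ
  | [] => 1
  | [_] => 1
  | a :: b :: l => p a b * pathProb p (b :: l)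

/-- `Pˣ(X_{τ_{S∖A}} = y)` : probability that the chain started at `x` leaves
`A` for the first time at `y` (all states strictly before the exit lie in `A`). -/
noncomputable def exitProb {S : Type*} (p : S → S → ℝ) (A : Set S)
    (x y : S) : ℝ :=
  ∑' γ : {γ : List S // γ.head? = some x ∧ γ.getLast? = some y ∧
      2 ≤ γ.length ∧ ∀ z ∈ γ.dropLast, z ∈ A},
    pathProb p γ.1

/-- `Pᶻ(X_{τ⁺_B} = z)` : probability that the first positive visit to `B`
is a return to `z` itself (intermediate states avoid `B`). -/
noncomputable def returnAvoid {S : Type*} (p : S → S → ℝ) (B : Set S)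
    (z : S) : ℝ :=
  ∑' γ : {γ : List S // γ.head? = some z ∧ γ.getLast? = some z ∧
      2 ≤ γ.length ∧ ∀ w ∈ (γ.drop 1).dropLast, w ∉ B},
    pathProb p γ.1

/-- The product `Π_i p(γ_i, γ_{i+1}) / (1 − P^{γ_i}(X_{τ⁺_{(S∖A)∪{γ_1,…,γ_i}}} = γ_i))`
along a path `γ`, where `pref` records the already visited prefix of `γ`. -/
noncomputable def rhsProd {S : Type*} (p : S → S → ℝ) (A : Set S) :
    List S → List S → ℝ
  | _, [] => 1
  | _, [_] => 1
  | pref, a :: b :: l =>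
      (p a b / (1 - returnAvoid p {z | z ∉ A ∨ z ∈ pref ++ [a]} a)) *
        rhsProd p A (pref ++ [a]) (b :: l)

/-- `γ ∈ Γ_A(x,y)` : a repetition-free path from `x` to `y` with all
intermediate states in `A`. -/
def SimplePathIn {S : Type*} (A : Set S) (x y : S) (γ : List S) : Prop :=
  γ.head? = some x ∧ γ.getLast? = some y ∧ 2 ≤ γ.length ∧ γ.Nodup ∧
    ∀ z ∈ (γ.drop 1).dropLast, z ∈ A


open scoped ENNReal

namespace List

variable {α : Type*} {x : α}

theorem exists_eq_append_cons_notMem_left {l : List α} (h : x ∈ l) :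
    ∃ s u, l = s ++ x :: u ∧ x ∉ s := by
  induction l with
  | nil => simp at h
  | cons a l ih =>
    by_cases hax : a = x
    · exact ⟨[], l, by rw [hax, nil_append], not_mem_nil⟩
    · obtain ⟨s, u, rfl, hs⟩ := ih ((mem_cons.1 h).resolve_left (Ne.symm hax))
      exact ⟨a :: s, u, rfl, by simp [hs, Ne.symm hax]⟩

theorem exists_eq_append_cons_notMem_right {l : List α} (h : x ∈ l) :
    ∃ s u, l = s ++ x :: u ∧ x ∉ u := by
  induction l with
  | nil => simp at h
  | cons a l ih =>
    by_cases hxl : x ∈ l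
    · obtain ⟨s, u, rfl, hu⟩ := ih hxl
      exact ⟨a :: s, u, rfl, hu⟩
    · exact ⟨[], l, by rw [(mem_cons.1 h).resolve_right hxl, nil_append], hxl⟩

theorem eq_of_append_cons_eq_of_notMem {s₁ s₂ u₁ u₂ : List α} (h₁ : x ∉ s₁) (h₂ : x ∉ s₂)
    (h : s₁ ++ x :: u₁ = s₂ ++ x :: u₂) : s₁ = s₂ := by
  rw [append_eq_append_iff] at h
  rcases h with ⟨m, rfl, hm⟩ | ⟨m, rfl, hm⟩ <;> cases m <;> simp_all

end List

section PathProb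

variable {S : Type*} (p : S → S → ℝ)

theorem pathProb_nonneg (hp : ∀ x y, 0 ≤ p x y) : ∀ γ, 0 ≤ pathProb p γ
  | [] | [_] => zero_le_one
  | a :: b :: l => mul_nonneg (hp a b) (pathProb_nonneg hp (b :: l))

theorem pathProb_append_cons (x : S) : ∀ l u : List S,
    pathProb p (l ++ x :: u) = pathProb p (l ++ [x]) * pathProb p (x :: u)
  | [], _ => by simp [pathProb]
  | [a], _ => by simp [pathProb]
  | a :: b :: l, u => by
    have ih := pathProb_append_cons x (b :: l) u
    simp only [List.cons_append] at ih ⊢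
    rw [pathProb, ih, pathProb, mul_assoc]

end PathProb

section ConsDecomposition

variable {S α : Type*} [AddCommMonoid α] [TopologicalSpace α] [ContinuousAdd α] [T3Space α]

theorem tsum_union_biUnion_cons (f : List S → α) (C : Set S) (L : S → Set (List S))
    (hU : Summable fun l : ↥(⋃ b ∈ C, List.cons b '' L b) => f l)
    (hL : ∀ b, Summable fun l : L b => f (b :: l)) :
    ∑' l : ↥({[]} ∪ ⋃ b ∈ C, List.cons b '' L b), f l =
      f [] + ∑' b : C, ∑' l : L b, f (b :: l) := by
  have hdisj : Disjoint {([] : List S)} (⋃ b ∈ C, List.cons b '' L b) := by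
    simp [Set.disjoint_singleton_left]
  have hpw : C.PairwiseDisjoint fun b => List.cons b '' L b := by
    intro b _ c _ hbc
    simp only [Function.onFun, Set.disjoint_left, Set.mem_image]
    rintro _ ⟨l, -, rfl⟩ ⟨m, -, h⟩
    exact hbc (List.cons.inj h).1.symm
  have himage (b : S) : ∑' l : ↥(List.cons b '' L b), f l = ∑' l : L b, f (b :: l) :=
    tsum_image f List.cons_injective.injOn
  rw [Summable.tsum_union_disjoint hdisj Summable.of_finite hU, tsum_singleton]
  congr 1
  rw [← (Set.biUnionEqSigmaOfDisjoint hpw).symm.tsum_eq, Summable.tsum_sigma']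
  · simp_rw [← himage]; rfl
  · intro b
    exact (Equiv.Set.imageOfInjOn _ _ List.cons_injective.injOn).summable_iff.1 (hL b)
  · exact (Set.biUnionEqSigmaOfDisjoint hpw).symm.summable_iff.2 hU

end ConsDecomposition

section ExitMass

variable {S : Type*}

def listsIn (C : Set S) : Set (List S) := {l | ∀ c ∈ l, c ∈ C}

theorem listsIn_eq_union_biUnion_cons (C : Set S) :
    listsIn C = {[]} ∪ ⋃ b ∈ C, List.cons b '' listsIn C := by
  ext (_ | ⟨b, l⟩) <;> simp [listsIn, and_comm]

theorem mem_listsIn_diff_singleton {C : Set S} {x : S} {l : List S} :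
    l ∈ listsIn (C \ {x}) ↔ l ∈ listsIn C ∧ x ∉ l := by
  simp only [listsIn, Set.mem_ofPred_eq, Set.mem_sdiff, Set.mem_singleton_iff]
  exact ⟨fun h => ⟨fun c hc => (h c hc).1, fun hx => (h x hx).2 rfl⟩,
    fun h c hc => ⟨h.1 c hc, by rintro rfl; exact h.2 hc⟩⟩

theorem listsIn_eq_union_biUnion_append_cons {C : Set S} {x : S} (hx : x ∈ C) :
    listsIn C = listsIn (C \ {x}) ∪ ⋃ s ∈ listsIn (C \ {x}), (s ++ x :: ·) '' listsIn C := by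
  ext l
  simp only [Set.mem_union, Set.mem_iUnion, Set.mem_image, exists_prop, mem_listsIn_diff_singleton]
  constructor
  · intro hl
    by_cases hxl : x ∈ l
    · obtain ⟨s, u, rfl, hs⟩ := List.exists_eq_append_cons_notMem_left hxl
      exact .inr ⟨s, ⟨fun c hc => hl c (by simp [hc]), hs⟩, u, fun c hc => hl c (by simp [hc]), rfl⟩
    · exact .inl ⟨hl, hxl⟩
  · rintro (⟨hl, -⟩ | ⟨s, ⟨hs, -⟩, u, hu, rfl⟩)
    · exact hl
    · intro c hc
      simp only [List.mem_append, List.mem_cons] at hc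
      rcases hc with hc | rfl | hc
      exacts [hs c hc, hx, hu c hc]

theorem cons_append_singleton_injective (x y : S) :
    Function.Injective fun l : List S => x :: (l ++ [y]) :=
  List.cons_injective.comp (List.append_left_injective [y])

theorem setOf_endpoints_eq_image (x y : S) (P : List S → Prop) :
    {γ : List S | γ.head? = some x ∧ γ.getLast? = some y ∧ 2 ≤ γ.length ∧ P γ} =
      (fun l => x :: (l ++ [y])) '' {l | P (x :: (l ++ [y]))} := by
  ext γ
  constructor
  · rintro ⟨hh, hl, hlen, hP⟩
    obtain ⟨_ | ⟨c, l⟩, rfl⟩ := List.getLast?_eq_some_iff.1 hl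
    · simp at hlen
    obtain rfl : c = x := by simpa using hh
    exact ⟨l, hP, rfl⟩
  · rintro ⟨l, hP, rfl⟩
    exact ⟨rfl, List.getLast?_concat (l := x :: l), by simp, hP⟩

theorem tsum_endpoints_eq {α : Type*} [AddCommMonoid α] [TopologicalSpace α] (x y : S)
    (P : List S → Prop) (f : List S → α) :
    ∑' γ : {γ : List S // γ.head? = some x ∧ γ.getLast? = some y ∧ 2 ≤ γ.length ∧ P γ}, f γ =
      ∑' l : {l // P (x :: (l ++ [y]))}, f (x :: (l.1 ++ [y])) := by
  have h := tsum_image f (cons_append_singleton_injective x y).injOn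
    (s := {l | P (x :: (l ++ [y]))})
  rw [← setOf_endpoints_eq_image] at h
  exact h

variable (p : S → S → ℝ)

/-- The weight of the paths `a, l₁, …, lₙ, z` with all `lᵢ ∈ C`; for `a ∈ C` and `z ∉ C` this is
`Pᵃ(X_{τ_{S∖C}} = z)`. Valued in `ℝ≥0∞`, so that the series may be rearranged freely. -/
noncomputable def exitMass (C : Set S) (a z : S) : ℝ≥0∞ :=
  ∑' l : listsIn C, ENNReal.ofReal (pathProb p (a :: (l ++ [z])))

variable {p} (hp : ∀ x y, 0 ≤ p x y)
include hp

theorem toReal_exitMass (C : Set S) (a z : S) :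
    (exitMass p C a z).toReal = ∑' l : listsIn C, pathProb p (a :: (l ++ [z])) := by
  rw [exitMass, ENNReal.tsum_toReal_eq fun _ => ENNReal.ofReal_ne_top]
  exact tsum_congr fun l => ENNReal.toReal_ofReal (pathProb_nonneg p hp _)

theorem exitProb_eq_toReal_exitMass {A : Set S} {x : S} (hx : x ∈ A) (y : S) :
    exitProb p A x y = (exitMass p A x y).toReal := by
  have hset : {l : List S | ∀ z ∈ (x :: (l ++ [y])).dropLast, z ∈ A} = listsIn A := by
    ext l
    change (∀ z ∈ ((x :: l) ++ [y]).dropLast, z ∈ A) ↔ ∀ c ∈ l, c ∈ A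
    rw [List.dropLast_concat]
    simp [hx]
  refine (tsum_endpoints_eq x y (fun γ => ∀ z ∈ γ.dropLast, z ∈ A) _).trans ?_
  rw [toReal_exitMass hp, ← hset]
  rfl

theorem returnAvoid_eq_toReal_exitMass (B : Set S) (z : S) :
    returnAvoid p B z = (exitMass p Bᶜ z z).toReal := by
  have hset : {l : List S | ∀ w ∈ ((z :: (l ++ [z])).drop 1).dropLast, w ∉ B} = listsIn Bᶜ := by
    ext l
    simp [listsIn]
  refine (tsum_endpoints_eq z z (fun γ => ∀ w ∈ (γ.drop 1).dropLast, w ∉ B) _).trans ?_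
  rw [toReal_exitMass hp, ← hset]
  rfl

theorem exitMass_eq_add_tsum (C : Set S) (a z : S) :
    exitMass p C a z =
      ENNReal.ofReal (p a z) + ∑' b : C, ENNReal.ofReal (p a b) * exitMass p C b z := by
  conv_lhs => rw [exitMass, listsIn_eq_union_biUnion_cons]
  rw [tsum_union_biUnion_cons (fun l => ENNReal.ofReal (pathProb p (a :: (l ++ [z])))) _ _
    ENNReal.summable fun _ => ENNReal.summable]
  congr 1
  · simp [pathProb]
  · refine tsum_congr fun b => ?_
    rw [exitMass, ← ENNReal.tsum_mul_left]
    refine tsum_congr fun l => ?_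
    rw [List.cons_append, pathProb, ENNReal.ofReal_mul (hp _ _)]

theorem exitMass_eq_add_mul {C : Set S} {x : S} (hx : x ∈ C) (a y : S) :
    exitMass p C a y =
      exitMass p (C \ {x}) a y + exitMass p (C \ {x}) a x * exitMass p C x y := by
  have hdisj : Disjoint (listsIn (C \ {x}))
      (⋃ s ∈ listsIn (C \ {x}), (s ++ x :: ·) '' listsIn C) := by
    simp only [Set.disjoint_left, Set.mem_iUnion, Set.mem_image, not_exists, not_and]
    rintro _ hl s - u - rfl
    exact (mem_listsIn_diff_singleton.1 hl).2 (by simp)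
  have hpw : (listsIn (C \ {x})).PairwiseDisjoint fun s => (s ++ x :: ·) '' listsIn C := by
    intro s₁ hs₁ s₂ hs₂ hne
    simp only [Function.onFun, Set.disjoint_left, Set.mem_image]
    rintro _ ⟨u₁, -, rfl⟩ ⟨u₂, -, h⟩
    exact hne (List.eq_of_append_cons_eq_of_notMem (mem_listsIn_diff_singleton.1 hs₁).2
      (mem_listsIn_diff_singleton.1 hs₂).2 h.symm)
  conv_lhs => rw [exitMass, listsIn_eq_union_biUnion_append_cons hx]
  rw [ENNReal.summable.tsum_union_disjoint
      (f := fun l => ENNReal.ofReal (pathProb p (a :: (l ++ [y])))) hdisj ENNReal.summable,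
    ENNReal.tsum_biUnion' (f := fun l => ENNReal.ofReal (pathProb p (a :: (l ++ [y])))) hpw,
    exitMass, exitMass, ← ENNReal.tsum_mul_right]
  congr 1
  refine tsum_congr fun s => ?_
  rw [tsum_image (fun l => ENNReal.ofReal (pathProb p (a :: (l ++ [y]))))
      (g := fun u => s.1 ++ x :: u)
      ((List.append_right_injective _).comp List.cons_injective).injOn,
    exitMass, ← ENNReal.tsum_mul_left]
  refine tsum_congr fun u => ?_
  rw [← ENNReal.ofReal_mul (pathProb_nonneg p hp _), ← List.cons_append (as := s.1),
    ← pathProb_append_cons]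
  simp

end ExitMass

theorem ENNReal.toReal_eq_div_of_eq_add_mul {e e' r : ℝ≥0∞} (h : e = e' + r * e) (he : e ≠ ⊤)
    (hr : r < 1) : e.toReal = e'.toReal / (1 - r.toReal) := by
  have hr_top : r ≠ ⊤ := (hr.trans ENNReal.one_lt_top).ne
  have hr_one : r.toReal < 1 := by
    simpa using (ENNReal.toReal_lt_toReal hr_top ENNReal.one_ne_top).2 hr
  have h' := congrArg ENNReal.toReal h
  rw [ENNReal.toReal_add (ne_top_of_le_ne_top he (h ▸ le_self_add))
    (ENNReal.mul_ne_top hr_top he), ENNReal.toReal_mul] at h'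
  rw [_root_.eq_div_iff (sub_ne_zero.2 hr_one.ne')]
  linear_combination h'

section ExitsSurely

variable {S : Type*} {p : S → S → ℝ}

theorem exitMass_diff_singleton_ne_zero (hp : ∀ x y, 0 ≤ p x y) {C : Set S} {x y : S}
    (h : exitMass p C x y ≠ 0) : exitMass p (C \ {x}) x y ≠ 0 := by
  obtain ⟨l, hl, hne⟩ : ∃ l ∈ listsIn C, ENNReal.ofReal (pathProb p (x :: (l ++ [y]))) ≠ 0 := by
    by_contra! h0
    exact h (ENNReal.tsum_eq_zero.2 fun l => h0 l l.2)
  obtain ⟨u, hu, hne⟩ : ∃ u ∈ listsIn (C \ {x}),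
      ENNReal.ofReal (pathProb p (x :: (u ++ [y]))) ≠ 0 := by
    by_cases hxl : x ∈ l
    · obtain ⟨s, u, rfl, hu⟩ := List.exists_eq_append_cons_notMem_right hxl
      refine ⟨u, mem_listsIn_diff_singleton.2 ⟨fun c hc => hl c (by simp [hc]), hu⟩, ?_⟩
      rw [show x :: (s ++ x :: u ++ [y]) = (x :: s) ++ x :: (u ++ [y]) by simp,
        pathProb_append_cons, ENNReal.ofReal_mul (pathProb_nonneg p hp _)] at hne
      exact right_ne_zero_of_mul hne
    · exact ⟨l, mem_listsIn_diff_singleton.2 ⟨hl, hxl⟩, hne⟩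
  exact fun h0 => hne (ENNReal.tsum_eq_zero.1 h0 ⟨u, hu⟩)

variable (p) in
def ExitsSurely (A : Set S) : Prop :=
  ∀ a ∈ A, ∑' b : ↥Aᶜ, exitMass p A a b = 1

variable (hp : ∀ x y, 0 ≤ p x y) {A : Set S} {x : S}
include hp

theorem ExitsSurely.tsum_diff_singleton_add (hA : ExitsSurely p A) (hx : x ∈ A) {a : S}
    (ha : a ∈ A) : ∑' b : ↥Aᶜ, exitMass p (A \ {x}) a b + exitMass p (A \ {x}) a x = 1 := by
  calc _ = ∑' b : ↥Aᶜ,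
        (exitMass p (A \ {x}) a b + exitMass p (A \ {x}) a x * exitMass p A x b) := by
        rw [ENNReal.tsum_add, ENNReal.tsum_mul_left, hA x hx, mul_one]
    _ = 1 := by
        rw [← hA a ha]
        exact tsum_congr fun b => (exitMass_eq_add_mul hp hx a b).symm

theorem ExitsSurely.diff_singleton (hA : ExitsSurely p A) (hx : x ∈ A) :
    ExitsSurely p (A \ {x}) := by
  intro a ha
  rw [Set.compl_sdiff, ENNReal.summable.tsum_union_disjoint (f := exitMass p (A \ {x}) a)
    (Set.disjoint_singleton_left.2 (Set.notMem_compl_iff.2 hx)) ENNReal.summable, tsum_singleton,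
    add_comm]
  exact hA.tsum_diff_singleton_add hp hx ha.1

theorem ExitsSurely.exitMass_diff_singleton_self_lt_one (hA : ExitsSurely p A) (hx : x ∈ A) :
    exitMass p (A \ {x}) x x < 1 := by
  have h := hA.tsum_diff_singleton_add hp hx hx
  refine lt_of_le_of_ne (h ▸ le_add_self) fun hR => ?_
  rw [hR] at h
  have h0 : ∑' b : ↥Aᶜ, exitMass p (A \ {x}) x b = 0 := by simpa using h
  have : ∑' b : ↥Aᶜ, exitMass p A x b = 0 := ENNReal.tsum_eq_zero.2 fun b => by
    by_contra hb
    exact exitMass_diff_singleton_ne_zero hp hb (ENNReal.tsum_eq_zero.1 h0 b)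
  rw [hA x hx] at this
  exact one_ne_zero this

end ExitsSurely

section Stochastic

variable {S : Type*} [Fintype S] {p : S → S → ℝ} (hp : ∀ x y, 0 ≤ p x y)
  (hrow : ∀ x, ∑ y, p x y = 1)
include hp hrow

theorem ofReal_add_tsum_ofReal_le_one {C : Set S} {z : S} (hz : z ∉ C) (a : S) :
    ENNReal.ofReal (p a z) + ∑' b : C, ENNReal.ofReal (p a b) ≤ 1 := by
  calc ENNReal.ofReal (p a z) + ∑' b : C, ENNReal.ofReal (p a b)
      = ∑' b : ↥({z} ∪ C), ENNReal.ofReal (p a b) := by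
        rw [ENNReal.summable.tsum_union_disjoint (f := fun b => ENNReal.ofReal (p a b))
          (Set.disjoint_singleton_left.2 hz) ENNReal.summable,
          tsum_singleton z fun b => ENNReal.ofReal (p a b)]
    _ ≤ ∑' b, ENNReal.ofReal (p a b) :=
        ENNReal.tsum_comp_le_tsum_of_injective Subtype.val_injective _
    _ = 1 := by
        rw [tsum_fintype, ← ENNReal.ofReal_sum_of_nonneg fun b _ => hp a b, hrow,
          ENNReal.ofReal_one]

/-- Bounding the exit paths with fewer than `n` interior states by induction on `n` avoids
having to know beforehand that `exitMass` is finite. -/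
theorem tsum_ite_length_lt_le_one {C : Set S} {z : S} (hz : z ∉ C) : ∀ (n : ℕ) (a : S),
    ∑' l : listsIn C,
      (if l.1.length < n then ENNReal.ofReal (pathProb p (a :: (l.1 ++ [z]))) else 0) ≤ 1
  | 0, a => by simp
  | n + 1, a => by
    have hstep (b : S) (l : List S) :
        (if (b :: l).length < n + 1 then ENNReal.ofReal (pathProb p (a :: (b :: l ++ [z])))
          else 0) =
        ENNReal.ofReal (p a b) *
          if l.length < n then ENNReal.ofReal (pathProb p (b :: (l ++ [z]))) else 0 := by
      simp only [List.cons_append, pathProb, ENNReal.ofReal_mul (hp a b), mul_ite, mul_zero,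
        List.length_cons, Nat.add_lt_add_iff_right]
    conv_lhs => rw [listsIn_eq_union_biUnion_cons]
    rw [tsum_union_biUnion_cons (fun l => if l.length < n + 1 then
      ENNReal.ofReal (pathProb p (a :: (l ++ [z]))) else 0) _ _
      ENNReal.summable fun _ => ENNReal.summable]
    simp only [hstep, ENNReal.tsum_mul_left, List.length_nil, Nat.zero_lt_succ, if_true,
      List.nil_append, pathProb, mul_one]
    calc _ ≤ ENNReal.ofReal (p a z) + ∑' b : C, ENNReal.ofReal (p a b) * 1 := by
          gcongr with b
          exact tsum_ite_length_lt_le_one hz n b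
      _ ≤ 1 := by simpa using ofReal_add_tsum_ofReal_le_one hp hrow hz a

theorem exitMass_le_one {C : Set S} {z : S} (hz : z ∉ C) (a : S) : exitMass p C a z ≤ 1 := by
  refine tsum_le_of_sum_le' zero_le_one fun F => ?_
  let n := F.sup (fun l => l.1.length) + 1
  calc ∑ l ∈ F, ENNReal.ofReal (pathProb p (a :: (l.1 ++ [z])))
      = ∑ l ∈ F, if l.1.length < n then ENNReal.ofReal (pathProb p (a :: (l.1 ++ [z])))
          else 0 :=
        Finset.sum_congr rfl fun l hl =>
          (if_pos (Nat.lt_succ_of_le (Finset.le_sup (f := fun l => l.1.length) hl))).symm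
    _ ≤ _ := ENNReal.sum_le_tsum F
    _ ≤ 1 := tsum_ite_length_lt_le_one hp hrow hz n a

theorem exitMass_ne_top {C : Set S} {z : S} (hz : z ∉ C) (a : S) : exitMass p C a z ≠ ⊤ :=
  ne_top_of_le_ne_top ENNReal.one_ne_top (exitMass_le_one hp hrow hz a)

theorem toReal_exitMass_eq_add_tsum {C : Set S} {z : S} (hz : z ∉ C) (a : S) :
    (exitMass p C a z).toReal = p a z + ∑' b : C, p a b * (exitMass p C b z).toReal := by
  have h := exitMass_eq_add_tsum hp C a z
  have hsum : ∑' b : C, ENNReal.ofReal (p a b) * exitMass p C b z ≠ ⊤ :=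
    ne_top_of_le_ne_top (exitMass_ne_top hp hrow hz a) (h ▸ le_add_self)
  rw [h, ENNReal.toReal_add ENNReal.ofReal_ne_top hsum, ENNReal.toReal_ofReal (hp a z),
    ENNReal.tsum_toReal_eq fun b : C => ENNReal.mul_ne_top ENNReal.ofReal_ne_top
      (exitMass_ne_top hp hrow hz b)]
  simp only [ENNReal.toReal_mul, ENNReal.toReal_ofReal (hp _ _)]

theorem ExitsSurely.toReal_exitMass_eq_div {A : Set S} (hA : ExitsSurely p A) {x y : S}
    (hx : x ∈ A) (hy : y ∉ A) :
    (exitMass p A x y).toReal =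
      (exitMass p (A \ {x}) x y).toReal / (1 - (exitMass p (A \ {x}) x x).toReal) :=
  ENNReal.toReal_eq_div_of_eq_add_mul (exitMass_eq_add_mul hp hx x y)
    (exitMass_ne_top hp hrow hy x) (hA.exitMass_diff_singleton_self_lt_one hp hx)

theorem exitsSurely_of_sum_exitProb {A : Set S} [DecidablePred (· ∈ A)]
    (hexit : ∀ a ∈ A, ∑ b ∈ Finset.univ.filter (· ∉ A), exitProb p A a b = 1) :
    ExitsSurely p A := by
  intro a ha
  have hfin : ∀ b ∈ Finset.univ.filter (· ∉ A), exitMass p A a b ≠ ⊤ := fun b hb =>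
    exitMass_ne_top hp hrow (Finset.mem_filter.1 hb).2 a
  rw [tsum_fintype, ← Finset.sum_subtype (Finset.univ.filter (· ∉ A)) (by simp),
    ← ENNReal.toReal_eq_one_iff, ENNReal.toReal_sum hfin, ← hexit a ha]
  exact Finset.sum_congr rfl fun b _ => (exitProb_eq_toReal_exitMass hp ha b).symm

end Stochastic

section RhsProd

variable {S : Type*} (p : S → S → ℝ)

theorem rhsProd_cons_pref (C : Set S) (c : S) : ∀ pref γ : List S,
    rhsProd p C (c :: pref) γ = rhsProd p (C \ {c}) pref γ
  | _, [] | _, [_] => rfl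
  | pref, a :: b :: l => by
    have hB : {z | z ∉ C ∨ z ∈ c :: pref ++ [a]} = {z | z ∉ C \ {c} ∨ z ∈ pref ++ [a]} := by
      ext z
      simp only [Set.mem_ofPred_eq, Set.mem_sdiff, Set.mem_singleton_iff, List.cons_append,
        List.mem_cons]
      tauto
    rw [rhsProd, rhsProd, hB, List.cons_append, rhsProd_cons_pref C c (pref ++ [a]) (b :: l)]

theorem rhsProd_nil_cons_cons (A : Set S) (x b : S) (l : List S) :
    rhsProd p A [] (x :: b :: l) =
      p x b / (1 - returnAvoid p {z | z ∉ A ∨ z ∈ [x]} x) * rhsProd p (A \ {x}) [] (b :: l) := by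
  rw [rhsProd, List.nil_append, rhsProd_cons_pref]

theorem rhsProd_eq_zero_of_pathProb_eq_zero (A : Set S) :
    ∀ pref γ, pathProb p γ = 0 → rhsProd p A pref γ = 0
  | _, [], h | _, [_], h => absurd h one_ne_zero
  | pref, a :: b :: l, h => by
    rw [rhsProd]
    rcases mul_eq_zero.1 h with h | h
    · rw [h, zero_div, zero_mul]
    · rw [rhsProd_eq_zero_of_pathProb_eq_zero A _ (b :: l) h, mul_zero]

/-- The interiors of the paths in `Γ_A(x, y)`. -/
def simpleInteriors (A : Set S) (x y : S) : Set (List S) :=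
  {l | (x :: (l ++ [y])).Nodup ∧ l ∈ listsIn A}

theorem simpleInteriors_finite [Fintype S] (A : Set S) (x y : S) :
    (simpleInteriors A x y).Finite :=
  (List.finite_length_le S (Fintype.card S)).subset fun _ hl =>
    (List.nodup_cons.1 hl.1).2.of_append_left.length_le_card

theorem simpleInteriors_eq_union_biUnion_cons {A : Set S} {x y : S} (hxy : x ≠ y) :
    simpleInteriors A x y =
      {[]} ∪ ⋃ b ∈ A \ {x}, List.cons b '' simpleInteriors (A \ {x}) b y := by
  ext (_ | ⟨b, l⟩)
  · simp [simpleInteriors, listsIn, hxy]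
  · simp [simpleInteriors, listsIn]
    constructor
    · rintro ⟨⟨⟨⟨hxb, hxl⟩, -⟩, hb, hl⟩, hbA, hlA⟩
      exact ⟨⟨⟨hb, hl⟩, fun c hc => ⟨hlA c hc, by rintro rfl; exact hxl hc⟩⟩, hbA, Ne.symm hxb⟩
    · rintro ⟨⟨⟨hb, hl⟩, hlA⟩, hbA, hbx⟩
      exact ⟨⟨⟨⟨Ne.symm hbx, fun hx => (hlA x hx).2 rfl⟩, hxy⟩, hb, hl⟩, hbA,
        fun c hc => (hlA c hc).1⟩

theorem tsum_rhsProd_simplePathIn_eq (hp : ∀ x y, 0 ≤ p x y) (A : Set S) (x y : S) :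
    ∑' γ : {γ // SimplePathIn A x y γ ∧ 0 < pathProb p γ}, rhsProd p A [] γ =
      ∑' l : simpleInteriors A x y, rhsProd p A [] (x :: (l ++ [y])) := by
  have hsupp : Function.support (rhsProd p A []) ⊆ {γ | 0 < pathProb p γ} := fun γ hγ =>
    lt_of_le_of_ne (pathProb_nonneg p hp γ) fun h0 =>
      hγ (rhsProd_eq_zero_of_pathProb_eq_zero p A [] γ h0.symm)
  have hpos : ∑' γ : {γ // SimplePathIn A x y γ ∧ 0 < pathProb p γ}, rhsProd p A [] γ =
      ∑' γ : {γ // SimplePathIn A x y γ}, rhsProd p A [] γ :=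
    calc _ = ∑' γ, ({γ | SimplePathIn A x y γ} ∩ {γ | 0 < pathProb p γ}).indicator
          (rhsProd p A []) γ := tsum_subtype _ _
      _ = _ := by
        rw [← Set.indicator_indicator, Set.indicator_eq_self.2 hsupp]
        exact (tsum_subtype _ _).symm
  have hset : {l | (x :: (l ++ [y])).Nodup ∧
      ∀ z ∈ ((x :: (l ++ [y])).drop 1).dropLast, z ∈ A} = simpleInteriors A x y := by
    ext l
    simp [simpleInteriors, listsIn]
  rw [hpos]
  refine (tsum_endpoints_eq x y (fun γ => γ.Nodup ∧ ∀ z ∈ (γ.drop 1).dropLast, z ∈ A) _).trans ?_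
  rw [← hset]
  rfl

theorem tsum_rhsProd_simpleInteriors [Fintype S] {A : Set S} {x y : S} (hx : x ∈ A)
    (hy : y ∉ A) :
    ∑' l : simpleInteriors A x y, rhsProd p A [] (x :: (l ++ [y])) =
      (p x y + ∑' b : ↥(A \ {x}), p x b *
        ∑' l : simpleInteriors (A \ {x}) b y, rhsProd p (A \ {x}) [] (b :: (l ++ [y]))) /
      (1 - returnAvoid p {z | z ∉ A ∨ z ∈ [x]} x) := by
  have hxy : x ≠ y := fun h => hy (h ▸ hx)
  have hU := simpleInteriors_eq_union_biUnion_cons (A := A) hxy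
  have : Finite ↥(⋃ b ∈ A \ {x}, List.cons b '' simpleInteriors (A \ {x}) b y) :=
    ((simpleInteriors_finite A x y).subset (hU ▸ Set.subset_union_right)).to_subtype
  have (b : S) : Finite ↥(simpleInteriors (A \ {x}) b y) :=
    (simpleInteriors_finite _ b y).to_subtype
  rw [hU, tsum_union_biUnion_cons (fun l => rhsProd p A [] (x :: (l ++ [y]))) _ _
    Summable.of_finite fun _ => Summable.of_finite]
  simp only [List.nil_append, List.cons_append, rhsProd_nil_cons_cons, tsum_mul_left]
  rw [show rhsProd p (A \ {x}) [] [y] = 1 from rfl, mul_one, add_div, ← tsum_div_const]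
  exact congrArg _ (tsum_congr fun b => div_mul_eq_mul_div _ _ _)

end RhsProd

theorem ExitsSurely.toReal_exitMass_eq_tsum_rhsProd {S : Type*} [Fintype S] {p : S → S → ℝ}
    (hp : ∀ x y, 0 ≤ p x y) (hrow : ∀ x, ∑ y, p x y = 1) {A : Set S} (hA : ExitsSurely p A)
    {x y : S} (hx : x ∈ A) (hy : y ∉ A) :
    (exitMass p A x y).toReal =
      ∑' l : simpleInteriors A x y, rhsProd p A [] (x :: (l ++ [y])) := by
  have hy' : y ∉ A \ {x} := fun h => hy h.1
  have ih (b : ↥(A \ {x})) :=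
    (hA.diff_singleton hp hx).toReal_exitMass_eq_tsum_rhsProd hp hrow b.2 hy'
  have hR : returnAvoid p {z | z ∉ A ∨ z ∈ [x]} x = (exitMass p (A \ {x}) x x).toReal := by
    rw [returnAvoid_eq_toReal_exitMass hp]
    congr
    ext z
    simp
  rw [tsum_rhsProd_simpleInteriors p hx hy, hR, hA.toReal_exitMass_eq_div hp hrow hx hy,
    toReal_exitMass_eq_add_tsum hp hrow hy']
  simp only [ih]
termination_by A.ncard
decreasing_by exact Set.ncard_sdiff_singleton_lt_of_mem hx

theorem exit_probability_decomposition_general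
    {S : Type*} [Fintype S]
    (p : S → S → ℝ) (hp : ∀ x y, 0 ≤ p x y) (hrow : ∀ x, ∑ y, p x y = 1)
    (A : Set S) [DecidablePred (· ∈ A)]
    (hexit : ∀ a ∈ A, ∑ b ∈ Finset.univ.filter (· ∉ A), exitProb p A a b = 1)
    (x : S) (hx : x ∈ A) (y : S) (hy : y ∉ A) :
    exitProb p A x y =
      ∑' γ : {γ : List S // SimplePathIn A x y γ ∧ 0 < pathProb p γ},
        rhsProd p A [] γ.1 := by
  rw [exitProb_eq_toReal_exitMass hp hx,
    (exitsSurely_of_sum_exitProb hp hrow hexit).toReal_exitMass_eq_tsum_rhsProd hp hrow hx hy,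
    tsum_rhsProd_simplePathIn_eq p hp]

theorem exit_probability_decomposition
    {S : Type*} [Fintype S] [DecidableEq S]
    (p : S → S → ℝ) (hp : ∀ x y, 0 ≤ p x y) (hrow : ∀ x, ∑ y, p x y = 1)
    (A : Set S) [DecidablePred (· ∈ A)]
    (hexit : ∀ a ∈ A, ∑ b ∈ Finset.univ.filter (· ∉ A), exitProb p A a b = 1)
    (x : S) (hx : x ∈ A) (y : S) (hy : y ∉ A) :
    exitProb p A x y =
      ∑' γ : {γ : List S // SimplePathIn A x y γ ∧ 0 < pathProb p γ},
        rhsProd p A [] γ.1 :=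
  exit_probability_decomposition_general p hp hrow A hexit x hx y hy
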